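/- Let (X,d) be a metric space and f : X → X a continuous map. If the hyperspace system (K(X), f̄) has the shadowing property, then (X,f) has the shadowing property. -/
import Mathlib

/-- The induced map `f̄` on the hyperspace of nonempty compact subsets,
`f̄(K) = f(K)`. -/
def barMap {X : Type*} [MetricSpace X] (f : X → X) (hf : Continuous f)
    (K : TopologicalSpace.NonemptyCompacts X) : TopologicalSpace.NonemptyCompacts X :=
  ⟨⟨f '' (K : Set X), K.isCompact.image hf⟩, K.nonempty.image f⟩

/-- The system `(Y, g)` has the (full) shadowing property. -/
def ShadowingProperty {Y : Type*} [MetricSpace Y] (g : Y → Y) : Prop :=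
  ∀ ε : ℝ, 0 < ε → ∃ δ : ℝ, 0 < δ ∧
    ∀ c : ℕ → Y, (∀ j : ℕ, dist (g (c j)) (c (j + 1)) < δ) →
      ∃ x : Y, ∀ j : ℕ, dist (g^[j] x) (c j) < ε

lemma barMap_iterate_coe {X : Type*} [MetricSpace X] (f : X → X) (hf : Continuous f)
    (K : TopologicalSpace.NonemptyCompacts X) (j : ℕ) :
    ((barMap f hf)^[j] K : Set X) = f^[j] '' (K : Set X) := by
  induction j with
  | zero => simp
  | succ n ih =>
    rw [Function.iterate_succ' (barMap f hf), Function.iterate_succ' f, Set.image_comp]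
    show f '' ((barMap f hf)^[n] K : Set X) = _
    rw [ih]

lemma hausdorffDist_singleton_singleton {X : Type*} [MetricSpace X] (a b : X) :
    Metric.hausdorffDist ({a} : Set X) {b} = dist a b := by
  apply le_antisymm
  · apply Metric.hausdorffDist_le_of_mem_dist dist_nonneg
    · rintro x rfl; exact ⟨b, rfl, le_rfl⟩
    · rintro x rfl; exact ⟨a, rfl, (dist_comm x a).le⟩
  · have := Metric.infDist_le_hausdorffDist_of_mem (Set.mem_singleton a)
      (s := ({a} : Set X)) (t := {b})
      (Metric.hausdorffEdist_ne_top_of_nonempty_of_bounded ⟨a, rfl⟩ ⟨b, rfl⟩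
        Bornology.isBounded_singleton Bornology.isBounded_singleton)
    simpa [Metric.infDist_singleton] using this

/-- If the hyperspace system `(K(X), f̄)` has the shadowing property, then so does
`(X,f)`. -/
theorem shadowing_of_hyperspace_shadowing {X : Type*} [MetricSpace X]
    (f : X → X) (hf : Continuous f)
    (h : ShadowingProperty (barMap f hf)) :
    ShadowingProperty f := by
  intro ε hε
  obtain ⟨δ, hδ, hsh⟩ := h ε hε
  refine ⟨δ, hδ, fun c hc => ?_⟩
  set C : ℕ → TopologicalSpace.NonemptyCompacts X := fun j =>
    ⟨⟨{c j}, isCompact_singleton⟩, Set.singleton_nonempty _⟩ with hC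
  have hpseudo : ∀ j, dist (barMap f hf (C j)) (C (j + 1)) < δ := by
    intro j
    have : dist (barMap f hf (C j)) (C (j + 1)) = dist (f (c j)) (c (j + 1)) := by
      rw [Metric.NonemptyCompacts.dist_eq]
      show Metric.hausdorffDist (f '' {c j}) {c (j+1)} = _
      rw [Set.image_singleton, hausdorffDist_singleton_singleton]
    rw [this]; exact hc j
  obtain ⟨K, hK⟩ := hsh C hpseudo
  obtain ⟨x, hx⟩ := K.nonempty
  refine ⟨x, fun j => ?_⟩
  have hmem : f^[j] x ∈ ((barMap f hf)^[j] K : Set X) := by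
    rw [barMap_iterate_coe]; exact ⟨x, hx, rfl⟩
  have hne : EMetric.hausdorffEdist ((barMap f hf)^[j] K : Set X) (C j : Set X) ≠ ⊤ :=
    Metric.hausdorffEdist_ne_top_of_nonempty_of_bounded
      ((barMap f hf)^[j] K).nonempty (C j).nonempty
      ((barMap f hf)^[j] K).isCompact.isBounded (C j).isCompact.isBounded
  have := Metric.infDist_le_hausdorffDist_of_mem hmem hne
  have h2 : Metric.infDist (f^[j] x) (C j : Set X) = dist (f^[j] x) (c j) := by
    show Metric.infDist (f^[j] x) {c j} = _
    exact Metric.infDist_singleton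
  calc dist (f^[j] x) (c j) = Metric.infDist (f^[j] x) (C j : Set X) := h2.symm
    _ ≤ Metric.hausdorffDist ((barMap f hf)^[j] K : Set X) (C j : Set X) := this
    _ = dist ((barMap f hf)^[j] K) (C j) := (Metric.NonemptyCompacts.dist_eq).symm
    _ < ε := hK j
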